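/- arXiv:2104.15033 — 2 statements merged into one kernel-verified Lean document; each statement's English description precedes it below -/
import Mathlib

section
/- Let T be an invertible continuous linear operator on a Fréchet space which is AP-hypercyclic. Then T^{-1} is AP-hypercyclic. -/
open Filter Topology

def ContainsAPs (A : Set ℕ) : Prop :=
  ∀ m : ℕ, ∃ a k : ℕ, 1 ≤ a ∧ 1 ≤ k ∧ ∀ j ≤ m, a + j * k ∈ A

/-!
The points whose `T⁻¹`-orbit meets a fixed open set `V` along a progression `a, a + k, …, a + m k`
form an open set; intersecting these over a countable basis and all `m`, Baire's theorem reduces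
the claim to their density. Density comes from an AP-hypercyclic vector `x` of `T`: if
`T^(a + j k) x ∈ V` for `j ≤ m` and `z = T^(a + m k + b) x ∈ U`, then reading the progression
backwards from `z` gives `T^(-(b + j k)) z = T^(a + (m - j) k) x ∈ V`.
-/

section

variable {X : Type*}

def apVisitSet (f : X → X) (V : Set X) (m : ℕ) : Set X :=
  {z | ∃ a k : ℕ, 1 ≤ a ∧ 1 ≤ k ∧ ∀ j ≤ m, f^[a + j * k] z ∈ V}

theorem apVisitSet_mono (f : X → X) {V W : Set X} (hVW : V ⊆ W) (m : ℕ) :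
    apVisitSet f V m ⊆ apVisitSet f W m := fun _ ⟨a, k, ha, hk, hz⟩ ↦
  ⟨a, k, ha, hk, fun j hj ↦ hVW (hz j hj)⟩

variable [TopologicalSpace X]

def IsAPHypercyclic (f : X → X) : Prop :=
  ∃ x : X, ∀ U : Set X, IsOpen U → U.Nonempty → ContainsAPs {n : ℕ | f^[n] x ∈ U}

theorem isOpen_apVisitSet {f : X → X} (hf : Continuous f) {V : Set X} (hV : IsOpen V) (m : ℕ) :
    IsOpen (apVisitSet f V m) := by
  have : apVisitSet f V m =
      ⋃ (a : ℕ) (k : ℕ) (_ : 1 ≤ a) (_ : 1 ≤ k), ⋂ j ∈ Set.Iic m, f^[a + j * k] ⁻¹' V := by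
    ext z
    simp only [apVisitSet, Set.mem_ofPred_eq, Set.mem_iUnion, Set.mem_iInter, Set.mem_preimage,
      Set.mem_Iic, exists_prop]
  rw [this]
  exact isOpen_iUnion fun a ↦ isOpen_iUnion fun k ↦ isOpen_iUnion fun _ ↦ isOpen_iUnion fun _ ↦
    (Set.finite_Iic m).isOpen_biInter fun j _ ↦ hV.preimage (hf.iterate _)

open TopologicalSpace in
theorem isAPHypercyclic_of_dense_apVisitSet [Nonempty X] [BaireSpace X]
    [SecondCountableTopology X] {f : X → X} (hf : Continuous f)
    (hdense : ∀ V : Set X, IsOpen V → V.Nonempty → ∀ m, Dense (apVisitSet f V m)) :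
    IsAPHypercyclic f := by
  have hbasis := isBasis_countableBasis X
  have hres : ∀ᶠ x in residual X, ∀ V ∈ countableBasis X, ∀ m, x ∈ apVisitSet f V m := by
    refine (eventually_countable_ball (countable_countableBasis X)).2 fun V hV ↦
      eventually_countable_forall.2 fun m ↦ residual_of_dense_open
        (isOpen_apVisitSet hf (hbasis.isOpen hV) m) (hdense V (hbasis.isOpen hV) ?_ m)
    exact Set.nonempty_iff_ne_empty.2 fun h ↦ empty_notMem_countableBasis X (h ▸ hV)
  obtain ⟨x, hx⟩ := (dense_of_mem_residual hres).nonempty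
  refine ⟨x, fun U hU ⟨u, hu⟩ m ↦ ?_⟩
  obtain ⟨V, hV, -, hVU⟩ := hbasis.exists_subset_of_mem_open hu hU
  exact apVisitSet_mono f hVU m (hx V hV m)

namespace Homeomorph

theorem dense_apVisitSet_symm (f : X ≃ₜ X) {x : X}
    (hx : ∀ U : Set X, IsOpen U → U.Nonempty → ContainsAPs {n : ℕ | f^[n] x ∈ U})
    {V : Set X} (hV : IsOpen V) (hVne : V.Nonempty) (m : ℕ) :
    Dense (apVisitSet f.symm V m) := by
  refine dense_iff_inter_open.2 fun U hU hUne ↦ ?_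
  obtain ⟨a, k, -, hk, hxV⟩ := hx V hV hVne m
  obtain ⟨b, _, hb, -, hxU⟩ := hx (f^[a + m * k] ⁻¹' U) (hU.preimage (f.continuous.iterate _))
    (hUne.preimage (f.surjective.iterate _)) 0
  refine ⟨f^[a + m * k + b] x, by simpa [Function.iterate_add_apply] using hxU 0 le_rfl,
    b, k, hb, hk, fun j hj ↦ ?_⟩
  have hsplit : a + m * k + b = (b + j * k) + (a + (m - j) * k) := by
    have : j * k + (m - j) * k = m * k := by rw [← Nat.add_mul, Nat.add_sub_cancel' hj]
    omega
  rw [hsplit, Function.iterate_add_apply _ (b + j * k),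
    Function.LeftInverse.iterate f.symm_apply_apply]
  exact hxV (m - j) (Nat.sub_le m j)

theorem isAPHypercyclic_symm [BaireSpace X] [SecondCountableTopology X] (f : X ≃ₜ X)
    (hf : IsAPHypercyclic f) : IsAPHypercyclic f.symm :=
  let ⟨x, hx⟩ := hf
  have : Nonempty X := ⟨x⟩
  isAPHypercyclic_of_dense_apVisitSet f.symm.continuous fun _ hV hVne ↦
    f.dense_apVisitSet_symm hx hV hVne

end Homeomorph

end

theorem ContinuousLinearEquiv.coe_pow {R E : Type*} [Semiring R] [AddCommMonoid E]
    [Module R E] [TopologicalSpace E] (T : E ≃L[R] E) (n : ℕ) : ⇑(T ^ n) = (⇑T)^[n] := by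
  induction n with
  | zero => rfl
  | succ n ih => rw [pow_succ, Function.iterate_succ, ← ih]; rfl

theorem inverse_of_AP_hypercyclic_is_AP_hypercyclic_general
    {X : Type*} [AddCommGroup X] [Module ℝ X] [UniformSpace X] [IsUniformAddGroup X]
    [CompleteSpace X]
    [TopologicalSpace.MetrizableSpace X] [TopologicalSpace.SeparableSpace X]
    (T : X ≃L[ℝ] X)
    (h : ∃ x : X, ∀ U : Set X, IsOpen U → U.Nonempty →
        ContainsAPs {n : ℕ | (T ^ n) x ∈ U}) :
    ∃ x : X, ∀ U : Set X, IsOpen U → U.Nonempty →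
        ContainsAPs {n : ℕ | (T.symm ^ n) x ∈ U} := by
  have := IsUniformAddGroup.uniformity_countably_generated (α := X)
  have := UniformSpace.secondCountable_of_separable X
  simp only [ContinuousLinearEquiv.coe_pow] at h ⊢
  exact T.toHomeomorph.isAPHypercyclic_symm h

theorem inverse_of_AP_hypercyclic_is_AP_hypercyclic
    {X : Type*} [AddCommGroup X] [Module ℝ X] [UniformSpace X] [IsUniformAddGroup X]
    [ContinuousSMul ℝ X] [LocallyConvexSpace ℝ X] [CompleteSpace X]
    [TopologicalSpace.MetrizableSpace X] [TopologicalSpace.SeparableSpace X]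
    (T : X ≃L[ℝ] X)
    (h : ∃ x : X, ∀ U : Set X, IsOpen U → U.Nonempty →
        ContainsAPs {n : ℕ | (T ^ n) x ∈ U}) :
    ∃ x : X, ∀ U : Set X, IsOpen U → U.Nonempty →
        ContainsAPs {n : ℕ | (T.symm ^ n) x ∈ U} :=
  inverse_of_AP_hypercyclic_is_AP_hypercyclic_general T h
end

section
/- If T is a weakly mixing and multiply recurrent continuous linear operator on a separable Fréchet space, then T ⊕ T acting on X × X is AP-hypercyclic; that is, for all nonempty open sets U₁, U₂, V₁, V₂ and every m there exist x₁ ∈ U₁, x₂ ∈ U₂ and a, k ∈ ℕ such that T^{a+jk} x₁ ∈ V₁ and T^{a+jk} x₂ ∈ V₂ for all 0 ≤ j ≤ m. -/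
open Filter Topology

/-!
Transitivity of `T` gives `n` with `V₁ ∩ T⁻ⁿ V₂ ≠ ∅`; multiple recurrence applied to this open set
gives a step `k` and a point `y` whose progression `y, Tᵏ y, …, Tᵐᵏ y` stays in it. So `y` has its
progression in `V₁` and `Tⁿ y` has the same progression in `V₂`: the open sets of points with
`k`-step progressions of length `m + 1` in `V₁`, resp. `V₂`, are nonempty, and one application of
weak mixing sends `U₁`, `U₂` into them at a common time `a`.
-/

section

variable {X : Type*}

def progressionPreimage (f : X → X) (k m : ℕ) (V : Set X) : Set X :=
  {x | ∀ j ≤ m, f^[j * k] x ∈ V}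

section

variable {f : X → X} {k m : ℕ} {V : Set X}

theorem isOpen_progressionPreimage [TopologicalSpace X] (hf : Continuous f) (hV : IsOpen V) :
    IsOpen (progressionPreimage f k m V) := by
  have : progressionPreimage f k m V = ⋂ j ∈ Set.Iic m, f^[j * k] ⁻¹' V := by
    ext x
    simp [progressionPreimage]
  rw [this]
  exact (Set.finite_Iic m).isOpen_biInter fun j _ => hV.preimage (hf.iterate _)

theorem iterate_mem_progressionPreimage {n : ℕ} {x : X}
    (hx : x ∈ progressionPreimage f k m (f^[n] ⁻¹' V)) :
    f^[n] x ∈ progressionPreimage f k m V := fun j hj => by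
  rw [← Function.iterate_add_apply, Nat.add_comm, Function.iterate_add_apply]
  exact hx j hj

theorem iterate_add_mul_mem_of_mem_progressionPreimage {a j : ℕ} {x : X}
    (hx : f^[a] x ∈ progressionPreimage f k m V) (hj : j ≤ m) : f^[a + j * k] x ∈ V := by
  rw [Nat.add_comm, Function.iterate_add_apply]
  exact hx j hj

end

variable [TopologicalSpace X]

/-- `f ⊕ f` is topologically transitive on `X × X`. -/
def WeaklyMixing (f : X → X) : Prop :=
  ∀ U₁ U₂ V₁ V₂ : Set X, IsOpen U₁ → U₁.Nonempty → IsOpen U₂ → U₂.Nonempty →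
    IsOpen V₁ → V₁.Nonempty → IsOpen V₂ → V₂.Nonempty →
    ∃ n : ℕ, (∃ x ∈ U₁, f^[n] x ∈ V₁) ∧ ∃ x ∈ U₂, f^[n] x ∈ V₂

def MultiplyRecurrent (f : X → X) : Prop :=
  ∀ U : Set X, IsOpen U → U.Nonempty → ∀ m : ℕ,
    ∃ k : ℕ, 1 ≤ k ∧ ∃ x ∈ U, x ∈ progressionPreimage f k m U

section

variable {f : X → X}

theorem MultiplyRecurrent.exists_progressionPreimage_nonempty_pair (hmr : MultiplyRecurrent f)
    (hf : Continuous f) {V₁ V₂ : Set X} (hV₁ : IsOpen V₁) (hV₂ : IsOpen V₂) {n : ℕ}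
    (hV : (V₁ ∩ f^[n] ⁻¹' V₂).Nonempty) (m : ℕ) :
    ∃ k : ℕ, 1 ≤ k ∧ (progressionPreimage f k m V₁).Nonempty ∧
      (progressionPreimage f k m V₂).Nonempty := by
  obtain ⟨k, hk, y, -, hy⟩ :=
    hmr _ (hV₁.inter (hV₂.preimage (hf.iterate n))) hV m
  exact ⟨k, hk, ⟨y, fun j hj => (hy j hj).1⟩,
    ⟨f^[n] y, iterate_mem_progressionPreimage fun j hj => (hy j hj).2⟩⟩

theorem WeaklyMixing.exists_progression_pair (hwm : WeaklyMixing f) (hmr : MultiplyRecurrent f)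
    (hf : Continuous f) {U₁ U₂ V₁ V₂ : Set X} (hU₁ : IsOpen U₁) (hU₁ne : U₁.Nonempty)
    (hU₂ : IsOpen U₂) (hU₂ne : U₂.Nonempty) (hV₁ : IsOpen V₁) (hV₁ne : V₁.Nonempty)
    (hV₂ : IsOpen V₂) (hV₂ne : V₂.Nonempty) (m : ℕ) :
    ∃ x₁ ∈ U₁, ∃ x₂ ∈ U₂, ∃ a k : ℕ, 1 ≤ k ∧
      ∀ j ≤ m, f^[a + j * k] x₁ ∈ V₁ ∧ f^[a + j * k] x₂ ∈ V₂ := by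
  obtain ⟨n, ⟨x, hxV₁, hxV₂⟩, -⟩ := hwm V₁ V₁ V₂ V₂ hV₁ hV₁ne hV₁ hV₁ne hV₂ hV₂ne hV₂ hV₂ne
  obtain ⟨k, hk, hW₁, hW₂⟩ :=
    hmr.exists_progressionPreimage_nonempty_pair hf hV₁ hV₂ ⟨x, hxV₁, hxV₂⟩ m
  obtain ⟨a, ⟨x₁, hx₁U, hx₁W⟩, ⟨x₂, hx₂U, hx₂W⟩⟩ :=
    hwm U₁ U₂ _ _ hU₁ hU₁ne hU₂ hU₂ne (isOpen_progressionPreimage hf hV₁) hW₁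
      (isOpen_progressionPreimage hf hV₂) hW₂
  exact ⟨x₁, hx₁U, x₂, hx₂U, a, k, hk, fun j hj =>
    ⟨iterate_add_mul_mem_of_mem_progressionPreimage hx₁W hj,
      iterate_add_mul_mem_of_mem_progressionPreimage hx₂W hj⟩⟩

end

end

theorem weaklyMixing_multiplyRecurrent_implies_sum_AP_hypercyclic_general
    {X : Type*} [AddCommGroup X] [Module ℝ X] [UniformSpace X]
    (T : X →L[ℝ] X)
    (hwm : ∀ U₁ U₂ V₁ V₂ : Set X, IsOpen U₁ → U₁.Nonempty → IsOpen U₂ → U₂.Nonempty →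
        IsOpen V₁ → V₁.Nonempty → IsOpen V₂ → V₂.Nonempty →
        ∃ n : ℕ, (∃ x ∈ U₁, (T ^ n) x ∈ V₁) ∧ ∃ x ∈ U₂, (T ^ n) x ∈ V₂)
    (hmr : ∀ U : Set X, IsOpen U → U.Nonempty → ∀ m : ℕ,
        ∃ k : ℕ, 1 ≤ k ∧ ∃ x ∈ U, ∀ j ≤ m, (T ^ (j * k)) x ∈ U) :
    ∀ U₁ U₂ V₁ V₂ : Set X, IsOpen U₁ → U₁.Nonempty → IsOpen U₂ → U₂.Nonempty →
      IsOpen V₁ → V₁.Nonempty → IsOpen V₂ → V₂.Nonempty → ∀ m : ℕ,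
      ∃ x₁ ∈ U₁, ∃ x₂ ∈ U₂, ∃ a k : ℕ, 1 ≤ k ∧
        ∀ j ≤ m, (T ^ (a + j * k)) x₁ ∈ V₁ ∧ (T ^ (a + j * k)) x₂ ∈ V₂ := by
  simp only [FunLike.coe_pow_eq_iterate] at hwm hmr ⊢
  intro U₁ U₂ V₁ V₂ hU₁ hU₁ne hU₂ hU₂ne hV₁ hV₁ne hV₂ hV₂ne m
  exact WeaklyMixing.exists_progression_pair hwm hmr T.continuous
    hU₁ hU₁ne hU₂ hU₂ne hV₁ hV₁ne hV₂ hV₂ne m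

theorem weaklyMixing_multiplyRecurrent_implies_sum_AP_hypercyclic
    {X : Type*} [AddCommGroup X] [Module ℝ X] [UniformSpace X] [IsUniformAddGroup X]
    [ContinuousSMul ℝ X] [LocallyConvexSpace ℝ X] [CompleteSpace X]
    [TopologicalSpace.MetrizableSpace X] [TopologicalSpace.SeparableSpace X]
    (T : X →L[ℝ] X)
    (hwm : ∀ U₁ U₂ V₁ V₂ : Set X, IsOpen U₁ → U₁.Nonempty → IsOpen U₂ → U₂.Nonempty →
        IsOpen V₁ → V₁.Nonempty → IsOpen V₂ → V₂.Nonempty →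
        ∃ n : ℕ, (∃ x ∈ U₁, (T ^ n) x ∈ V₁) ∧ ∃ x ∈ U₂, (T ^ n) x ∈ V₂)
    (hmr : ∀ U : Set X, IsOpen U → U.Nonempty → ∀ m : ℕ,
        ∃ k : ℕ, 1 ≤ k ∧ ∃ x ∈ U, ∀ j ≤ m, (T ^ (j * k)) x ∈ U) :
    ∀ U₁ U₂ V₁ V₂ : Set X, IsOpen U₁ → U₁.Nonempty → IsOpen U₂ → U₂.Nonempty →
      IsOpen V₁ → V₁.Nonempty → IsOpen V₂ → V₂.Nonempty → ∀ m : ℕ,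
      ∃ x₁ ∈ U₁, ∃ x₂ ∈ U₂, ∃ a k : ℕ, 1 ≤ k ∧
        ∀ j ≤ m, (T ^ (a + j * k)) x₁ ∈ V₁ ∧ (T ^ (a + j * k)) x₂ ∈ V₂ :=
  weaklyMixing_multiplyRecurrent_implies_sum_AP_hypercyclic_general T hwm hmr
end
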